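/- arXiv:1103.2021 — 7 statements merged into one kernel-verified Lean document; each statement's English description precedes it below -/
import Mathlib

section
/- For any probability densities s, t with respect to λ and any ρ ∈ (0,1), C_ρ · d²(s,t) ≤ JKL_ρ(s,t), where d²(s,t) = ∫ (√s − √t)² dλ is the squared Hellinger distance and C_ρ = (1/ρ) min((1−ρ)/ρ, 1) (ln(1 + ρ/(1−ρ)) − ρ). -/
/-!
Put `x = √(t / s)`. Pointwise, the Hellinger integrand is `s (x - 1)²` and the JKL integrand plus
`ρ (t - s)` is `s (ρ (x² - 1) - log (1 - ρ + ρ x²))`; the correction `ρ (t - s)` integrates to zero.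
So it suffices that `c (x - 1)² ≤ ρ (x² - 1) - log (1 - ρ + ρ x²)` for `x ≥ 0`, where `c = ρ C_ρ`.
The difference of the two sides has derivative `2 (x - 1) P(x) / (1 - ρ + ρ x²)` with `P` a
quadratic that increases on `[0, ∞)` when `c ≤ ρ` and has `P(1) = 2ρ² - c ≥ 0`. Hence on `[0, ∞)`
the difference is smallest at `x = 0` or `x = 1`, where it is `-log (1 - ρ) - ρ - c ≥ 0` and `0`.
-/

open MeasureTheory Real Set

noncomputable def jklExcess (ρ c x : ℝ) : ℝ :=
  ρ * (x ^ 2 - 1) - log (1 - ρ + ρ * x ^ 2) - c * (x - 1) ^ 2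

noncomputable def jklHellingerConst (ρ : ℝ) : ℝ := min ((1 - ρ) / ρ) 1 * (-log (1 - ρ) - ρ)

section

variable {ρ c : ℝ}

lemma one_sub_add_mul_sq_pos (hρ0 : 0 ≤ ρ) (hρ1 : ρ < 1) (y : ℝ) : 0 < 1 - ρ + ρ * y ^ 2 := by
  nlinarith [mul_nonneg hρ0 (sq_nonneg y)]

lemma hasDerivAt_jklExcess {y : ℝ} (hw : 0 < 1 - ρ + ρ * y ^ 2) :
    HasDerivAt (jklExcess ρ c)
      (2 * (y - 1) * (ρ * (ρ - c) * y ^ 2 + ρ ^ 2 * y - c * (1 - ρ)) / (1 - ρ + ρ * y ^ 2)) y := by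
  have hsq : HasDerivAt (fun y : ℝ => y ^ 2) (2 * y) y := by simpa using hasDerivAt_pow 2 y
  have hsq1 : HasDerivAt (fun y : ℝ => (y - 1) ^ 2) (2 * (y - 1)) y := by
    simpa using ((hasDerivAt_id y).sub_const 1).fun_pow 2
  have hlog := ((hsq.const_mul ρ).const_add (1 - ρ)).log hw.ne'
  have h := (((hsq.const_mul ρ).sub_const ρ).fun_sub hlog).fun_sub (hsq1.const_mul c)
  refine (h.congr_deriv ?_).congr_of_eventuallyEq (.of_forall fun z => ?_)
  · field_simp
    ring
  · simp only [jklExcess]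
    ring

lemma monotoneOn_jklExcess (hρ0 : 0 ≤ ρ) (hρ1 : ρ < 1) {a b : ℝ}
    (h : ∀ y ∈ Ioo a b, 0 ≤ (y - 1) * (ρ * (ρ - c) * y ^ 2 + ρ ^ 2 * y - c * (1 - ρ))) :
    MonotoneOn (jklExcess ρ c) (Icc a b) := by
  have hw := one_sub_add_mul_sq_pos hρ0 hρ1
  refine monotoneOn_of_hasDerivWithinAt_nonneg (convex_Icc a b)
    (fun y _ => (hasDerivAt_jklExcess (hw y)).continuousAt.continuousWithinAt)
    (fun y _ => (hasDerivAt_jklExcess (hw y)).hasDerivWithinAt) fun y hy => ?_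
  rw [interior_Icc] at hy
  exact div_nonneg (by linarith [h y hy]) (hw y).le

lemma antitoneOn_jklExcess (hρ0 : 0 ≤ ρ) (hρ1 : ρ < 1) {a b : ℝ}
    (h : ∀ y ∈ Ioo a b, (y - 1) * (ρ * (ρ - c) * y ^ 2 + ρ ^ 2 * y - c * (1 - ρ)) ≤ 0) :
    AntitoneOn (jklExcess ρ c) (Icc a b) := by
  have hw := one_sub_add_mul_sq_pos hρ0 hρ1
  refine antitoneOn_of_hasDerivWithinAt_nonpos (convex_Icc a b)
    (fun y _ => (hasDerivAt_jklExcess (hw y)).continuousAt.continuousWithinAt)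
    (fun y _ => (hasDerivAt_jklExcess (hw y)).hasDerivWithinAt) fun y hy => ?_
  rw [interior_Icc] at hy
  exact div_nonpos_of_nonpos_of_nonneg (by linarith [h y hy]) (hw y).le

lemma jklExcess_nonneg (hρ0 : 0 ≤ ρ) (hρ1 : ρ < 1) (hcL : c ≤ -log (1 - ρ) - ρ)
    (hcρ : c ≤ ρ) (hc2 : c ≤ 2 * ρ ^ 2) {x : ℝ} (hx : 0 ≤ x) : 0 ≤ jklExcess ρ c x := by
  set P : ℝ → ℝ := fun y => ρ * (ρ - c) * y ^ 2 + ρ ^ 2 * y - c * (1 - ρ)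
  have hP : MonotoneOn P (Ici 0) := fun y (hy : 0 ≤ y) z _ hyz => by
    simp only [P]
    nlinarith [mul_nonneg (mul_nonneg hρ0 (sub_nonneg.2 hcρ)) (mul_nonneg (sub_nonneg.2 hyz)
      (add_nonneg hy (hy.trans hyz))), mul_nonneg (sq_nonneg ρ) (sub_nonneg.2 hyz)]
  have hP1 : 0 ≤ P 1 := by simp only [P]; nlinarith
  have h1 : jklExcess ρ c 1 = 0 := by simp [jklExcess]
  have h0 : 0 ≤ jklExcess ρ c 0 := by simp [jklExcess]; linarith
  rcases le_or_gt 1 x with hx1 | hx1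
  · rw [← h1]
    refine monotoneOn_jklExcess hρ0 hρ1 (fun y hy => mul_nonneg (by linarith [hy.1]) ?_)
      ⟨le_rfl, hx1⟩ ⟨hx1, le_rfl⟩ hx1
    exact hP1.trans (hP (mem_Ici.2 zero_le_one) (mem_Ici.2 (by linarith [hy.1])) hy.1.le)
  rcases le_or_gt 0 (P x) with hPx | hPx
  · rw [← h1]
    refine antitoneOn_jklExcess hρ0 hρ1
      (fun y hy => mul_nonpos_of_nonpos_of_nonneg (by linarith [hy.2]) ?_)
      ⟨le_rfl, hx1.le⟩ ⟨hx1.le, le_rfl⟩ hx1.le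
    exact hPx.trans (hP hx (mem_Ici.2 (by linarith [hy.1])) hy.1.le)
  · refine h0.trans (monotoneOn_jklExcess hρ0 hρ1
      (fun y hy => mul_nonneg_of_nonpos_of_nonpos (by linarith [hy.2]) ?_)
      ⟨le_rfl, hx⟩ ⟨hx, le_rfl⟩ hx)
    exact (hP (mem_Ici.2 (by linarith [hy.1])) hx hy.2.le).trans hPx.le

lemma neg_log_one_sub_sub_le (hρ1 : ρ < 1) : -log (1 - ρ) - ρ ≤ ρ ^ 2 / (1 - ρ) := by
  have h1ρ : 0 < 1 - ρ := by linarith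
  have := one_sub_inv_le_log_of_pos h1ρ
  have e : ρ ^ 2 / (1 - ρ) = (1 - ρ)⁻¹ - 1 - ρ := by field_simp; ring
  linarith

lemma jklHellingerConst_le_neg_log (hρ1 : ρ < 1) :
    jklHellingerConst ρ ≤ -log (1 - ρ) - ρ := by
  have := log_le_sub_one_of_pos (sub_pos.2 hρ1)
  exact mul_le_of_le_one_left (by linarith) (min_le_right _ _)

lemma jklHellingerConst_le_self (hρ0 : 0 < ρ) (hρ1 : ρ < 1) : jklHellingerConst ρ ≤ ρ :=
  calc jklHellingerConst ρ ≤ (1 - ρ) / ρ * (ρ ^ 2 / (1 - ρ)) := by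
        have := log_le_sub_one_of_pos (sub_pos.2 hρ1)
        exact mul_le_mul (min_le_left _ _) (neg_log_one_sub_sub_le hρ1) (by linarith)
          (div_nonneg (by linarith) hρ0.le)
    _ = ρ := by field_simp [(sub_pos.2 hρ1).ne']

lemma jklHellingerConst_le_two_mul_sq (hρ0 : 0 < ρ) (hρ1 : ρ < 1) :
    jklHellingerConst ρ ≤ 2 * ρ ^ 2 := by
  rcases le_total ρ (1 / 2) with hρ | hρ
  · calc jklHellingerConst ρ ≤ ρ ^ 2 / (1 - ρ) :=
          (jklHellingerConst_le_neg_log hρ1).trans (neg_log_one_sub_sub_le hρ1)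
      _ ≤ 2 * ρ ^ 2 := by rw [div_le_iff₀ (by linarith)]; nlinarith
  · nlinarith [jklHellingerConst_le_self hρ0 hρ1]

lemma mul_sq_sqrt_sub_sqrt_le (hρ0 : 0 ≤ ρ) (hρ1 : ρ < 1) (hcL : c ≤ -log (1 - ρ) - ρ)
    (hcρ : c ≤ ρ) (hc2 : c ≤ 2 * ρ ^ 2) {a b : ℝ} (ha : 0 ≤ a) (hb : 0 ≤ b) :
    c * (√a - √b) ^ 2 ≤ a * log (a / ((1 - ρ) * a + ρ * b)) + ρ * (b - a) := by
  rcases ha.eq_or_lt with rfl | ha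
  · simpa [sq_sqrt hb] using mul_le_mul_of_nonneg_right hcρ hb
  set x := √b / √a
  have hsa : 0 < √a := sqrt_pos.2 ha
  have hsb : √b = √a * x := (mul_div_cancel₀ _ hsa.ne').symm
  have hb' : b = a * x ^ 2 := by rw [← sq_sqrt hb, hsb, mul_pow, sq_sqrt ha.le]
  have hlog : log (a / ((1 - ρ) * a + ρ * b)) = -log (1 - ρ + ρ * x ^ 2) := by
    rw [← log_inv, hb']
    congr 1
    field_simp
  have hsq : (√a - √b) ^ 2 = a * (x - 1) ^ 2 := by
    rw [hsb]
    linear_combination (x - 1) ^ 2 * sq_sqrt ha.le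
  have key : c * (x - 1) ^ 2 ≤ ρ * (x ^ 2 - 1) - log (1 - ρ + ρ * x ^ 2) :=
    sub_nonneg.1 (jklExcess_nonneg hρ0 hρ1 hcL hcρ hc2 (div_nonneg (sqrt_nonneg b) hsa.le))
  calc c * (√a - √b) ^ 2 = a * (c * (x - 1) ^ 2) := by rw [hsq]; ring
    _ ≤ a * (ρ * (x ^ 2 - 1) - log (1 - ρ + ρ * x ^ 2)) := mul_le_mul_of_nonneg_left key ha.le
    _ = a * log (a / ((1 - ρ) * a + ρ * b)) + ρ * (b - a) := by rw [hlog, hb']; ring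

lemma mul_integral_hellinger_le_integral_jkl {α : Type*} [MeasurableSpace α] {μ : Measure α}
    (hρ0 : 0 ≤ ρ) (hρ1 : ρ < 1) (hcL : c ≤ -log (1 - ρ) - ρ)
    (hcρ : c ≤ ρ) (hc2 : c ≤ 2 * ρ ^ 2) {s t : α → ℝ}
    (hs : ∀ᵐ x ∂μ, 0 ≤ s x) (ht : ∀ᵐ x ∂μ, 0 ≤ t x)
    (hs_int : Integrable s μ) (ht_int : Integrable t μ) (hst : ∫ x, s x ∂μ = ∫ x, t x ∂μ)
    (hHel : Integrable (fun x => (√(s x) - √(t x)) ^ 2) μ)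
    (hJKL : Integrable (fun x => s x * log (s x / ((1 - ρ) * s x + ρ * t x))) μ) :
    c * ∫ x, (√(s x) - √(t x)) ^ 2 ∂μ ≤ ∫ x, s x * log (s x / ((1 - ρ) * s x + ρ * t x)) ∂μ := by
  have hdiff : Integrable (fun x => ρ * (t x - s x)) μ := (ht_int.sub hs_int).const_mul ρ
  calc c * ∫ x, (√(s x) - √(t x)) ^ 2 ∂μ = ∫ x, c * (√(s x) - √(t x)) ^ 2 ∂μ :=
        (integral_const_mul _ _).symm
    _ ≤ ∫ x, s x * log (s x / ((1 - ρ) * s x + ρ * t x)) + ρ * (t x - s x) ∂μ := by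
        refine integral_mono_ae (hHel.const_mul c) (hJKL.add hdiff) ?_
        filter_upwards [hs, ht] with x hsx htx
        exact mul_sq_sqrt_sub_sqrt_le hρ0 hρ1 hcL hcρ hc2 hsx htx
    _ = ∫ x, s x * log (s x / ((1 - ρ) * s x + ρ * t x)) ∂μ := by
        rw [integral_add hJKL hdiff, integral_const_mul, integral_sub ht_int hs_int, hst, sub_self,
          mul_zero, add_zero]

end

theorem hellinger_le_jkl_general {α : Type*} [MeasurableSpace α] (μ : Measure α)
    (s t : α → ℝ) (ρ : ℝ) (hρ : ρ ∈ Set.Ioo (0:ℝ) 1)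
    (hs : ∀ᵐ x ∂μ, 0 ≤ s x) (ht : ∀ᵐ x ∂μ, 0 ≤ t x)
    (hs1 : ∫ x, s x ∂μ = 1) (ht1 : ∫ x, t x ∂μ = 1)
    (hHel : Integrable (fun x => (Real.sqrt (s x) - Real.sqrt (t x))^2) μ)
    (hJKL : Integrable (fun x => s x * Real.log (s x / ((1 - ρ) * s x + ρ * t x))) μ) :
    (1 / ρ) * min ((1 - ρ) / ρ) 1 * (Real.log (1 + ρ / (1 - ρ)) - ρ) *
        ∫ x, (Real.sqrt (s x) - Real.sqrt (t x))^2 ∂μ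
      ≤ (1 / ρ) * ∫ x, s x * Real.log (s x / ((1 - ρ) * s x + ρ * t x)) ∂μ := by
  obtain ⟨hρ0, hρ1⟩ := hρ
  have hlog : log (1 + ρ / (1 - ρ)) = -log (1 - ρ) := by
    rw [← log_inv]
    congr 1
    field_simp [(sub_pos.2 hρ1).ne']
    ring
  have key := mul_integral_hellinger_le_integral_jkl hρ0.le hρ1 (jklHellingerConst_le_neg_log hρ1)
    (jklHellingerConst_le_self hρ0 hρ1) (jklHellingerConst_le_two_mul_sq hρ0 hρ1) hs ht
    (.of_integral_ne_zero (by simp [hs1])) (.of_integral_ne_zero (by simp [ht1]))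
    (hs1.trans ht1.symm) hHel hJKL
  calc _ = 1 / ρ * (jklHellingerConst ρ * ∫ x, (√(s x) - √(t x)) ^ 2 ∂μ) := by
        rw [hlog, jklHellingerConst]
        ring
    _ ≤ _ := mul_le_mul_of_nonneg_left key (one_div_nonneg.2 hρ0.le)

/-- `C_ρ · d²(s,t) ≤ JKL_ρ(s,t)` where `d²` is the squared Hellinger
distance and `C_ρ = (1/ρ) min((1-ρ)/ρ, 1) (ln(1 + ρ/(1-ρ)) - ρ)`. -/
theorem hellinger_le_jkl {α : Type*} [MeasurableSpace α] (μ : Measure α) [SigmaFinite μ]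
    (s t : α → ℝ) (ρ : ℝ) (hρ : ρ ∈ Set.Ioo (0:ℝ) 1)
    (hs : ∀ᵐ x ∂μ, 0 ≤ s x) (ht : ∀ᵐ x ∂μ, 0 ≤ t x)
    (hs1 : ∫ x, s x ∂μ = 1) (ht1 : ∫ x, t x ∂μ = 1)
    (hHel : Integrable (fun x => (Real.sqrt (s x) - Real.sqrt (t x))^2) μ)
    (hJKL : Integrable (fun x => s x * Real.log (s x / ((1 - ρ) * s x + ρ * t x))) μ) :
    (1 / ρ) * min ((1 - ρ) / ρ) 1 * (Real.log (1 + ρ / (1 - ρ)) - ρ) *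
        ∫ x, (Real.sqrt (s x) - Real.sqrt (t x))^2 ∂μ
      ≤ (1 / ρ) * ∫ x, s x * Real.log (s x / ((1 - ρ) * s x + ρ * t x)) ∂μ :=
  hellinger_le_jkl_general μ s t ρ hρ hs ht hs1 ht1 hHel hJKL
end

section
/- If s and t are probability densities with respect to λ with s dλ ≪ t dλ and ‖s/t‖_∞ < ∞, then d²(s,t) ≤ KL(s,t) ≤ (2 + ln‖s/t‖_∞) · d²(s,t), where d²(s,t) is the squared Hellinger distance. -/
open MeasureTheory Real

/-! With `x = s/t`, both integrands are perspectives of one-variable functions: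
`s log(s/t) - s + t = t (x log x - x + 1)` and `(√s - √t)² = t (√x - 1)²`, and the first one
integrates to `KL(s,t)` because `∫ s = ∫ t`. So everything reduces to
`(√x - 1)² ≤ x log x - x + 1 ≤ (2 + log M) (√x - 1)²` for `0 ≤ x ≤ M`, with `M = ‖s/t‖_∞ ≥ 1`
since `1 = ∫ s ≤ M ∫ t`. In the variable `u = √x` these follow from `u - 1 ≤ u log u`, from
`log u ≤ 2 (u - 1) / (u + 1)` on `(0, 1]` and from `log u ≤ (u - u⁻¹) / 2 = sinh (log u)` on
`[1, ∞)`. -/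

namespace Real

lemma log_le_two_mul_sub_one_div_add_one {u : ℝ} (hu : 0 < u) (hu1 : u ≤ 1) :
    log u ≤ 2 * (u - 1) / (u + 1) := by
  have h := le_log_one_add_of_nonneg (x := u⁻¹ - 1) (sub_nonneg.2 (one_le_inv_iff₀.2 ⟨hu, hu1⟩))
  have hrw : 2 * (u⁻¹ - 1) / (u⁻¹ - 1 + 2) = -(2 * (u - 1) / (u + 1)) := by
    rw [show u⁻¹ - 1 + 2 = (u + 1) / u by field_simp; ring]
    field_simp
    ring
  rw [add_sub_cancel, log_inv, hrw] at h
  linarith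

lemma log_le_sub_inv_div_two {u : ℝ} (hu : 1 ≤ u) : log u ≤ (u - u⁻¹) / 2 := by
  rw [← sinh_log (by positivity)]
  exact self_le_sinh_iff.2 (log_nonneg hu)

lemma sqrt_sub_one_sq_le_mul_log_sub_add_one {x : ℝ} (hx : 0 ≤ x) :
    (√x - 1) ^ 2 ≤ x * log x - x + 1 := by
  obtain ⟨u, hu, rfl⟩ : ∃ u, 0 ≤ u ∧ x = u ^ 2 := ⟨√x, sqrt_nonneg x, (sq_sqrt hx).symm⟩
  have hlog : u - 1 ≤ u * log u := by
    have := negMulLog_le_one_sub_self hu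
    rw [negMulLog] at this
    linarith
  rw [sqrt_sq hu, log_pow]
  push_cast
  nlinarith

lemma mul_log_sub_add_one_le_two_mul_sqrt_sub_one_sq {x : ℝ} (hx : 0 ≤ x) (hx1 : x ≤ 1) :
    x * log x - x + 1 ≤ 2 * (√x - 1) ^ 2 := by
  obtain ⟨u, hu, rfl⟩ : ∃ u, 0 ≤ u ∧ x = u ^ 2 := ⟨√x, sqrt_nonneg x, (sq_sqrt hx).symm⟩
  rw [sqrt_sq hu, log_pow]
  push_cast
  rcases hu.eq_or_lt with rfl | hu0
  · norm_num
  have hu1 : u ≤ 1 := by nlinarith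
  have hlog := log_le_two_mul_sub_one_div_add_one hu0 hu1
  rw [le_div_iff₀ (by linarith)] at hlog
  -- `(u + 1)` times the goal follows from `u²` times `hlog` and `(u - 1)³ ≤ 0`.
  nlinarith [mul_le_mul_of_nonneg_left hlog (sq_nonneg u), pow_two_nonneg (u - 1)]

lemma mul_log_sub_add_one_le_two_add_log_mul_sqrt_sub_one_sq {x : ℝ} (hx : 1 ≤ x) :
    x * log x - x + 1 ≤ (2 + log x) * (√x - 1) ^ 2 := by
  obtain ⟨u, hu, rfl⟩ : ∃ u, 0 ≤ u ∧ x = u ^ 2 := ⟨√x, sqrt_nonneg x, (sq_sqrt (by linarith)).symm⟩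
  rw [sqrt_sq hu, log_pow]
  push_cast
  have hu1 : 1 ≤ u := by nlinarith
  have hlog := log_le_sub_inv_div_two hu1
  have hinv : u * u⁻¹ = 1 := mul_inv_cancel₀ (by positivity)
  have hlog' : 2 * u * log u ≤ u ^ 2 - 1 := by nlinarith
  -- `u` times the goal follows from `2 u - 1` times `hlog'` and `(u - 1)³ ≥ 0`.
  nlinarith [mul_le_mul_of_nonneg_left hlog' (by linarith : (0:ℝ) ≤ 2 * u - 1), log_nonneg hu1]

lemma mul_log_sub_add_one_le_two_add_log_mul_of_le {x M : ℝ} (hx : 0 ≤ x) (hxM : x ≤ M)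
    (hM : 1 ≤ M) :
    x * log x - x + 1 ≤ (2 + log M) * (√x - 1) ^ 2 := by
  rcases le_total x 1 with hx1 | hx1
  · calc x * log x - x + 1 ≤ 2 * (√x - 1) ^ 2 :=
          mul_log_sub_add_one_le_two_mul_sqrt_sub_one_sq hx hx1
      _ ≤ (2 + log M) * (√x - 1) ^ 2 := by gcongr; linarith [log_nonneg hM]
  · calc x * log x - x + 1 ≤ (2 + log x) * (√x - 1) ^ 2 :=
          mul_log_sub_add_one_le_two_add_log_mul_sqrt_sub_one_sq hx1
      _ ≤ (2 + log M) * (√x - 1) ^ 2 := by gcongr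

lemma mul_log_div_sub_add_eq_mul {a b : ℝ} (hb : b ≠ 0) :
    a * log (a / b) - a + b = b * (a / b * log (a / b) - a / b + 1) := by
  field_simp

lemma sqrt_sub_sqrt_sq_eq_mul {a b : ℝ} (hb : 0 < b) :
    (√a - √b) ^ 2 = b * (√(a / b) - 1) ^ 2 := by
  have hb' : √b ≠ 0 := (sqrt_pos.2 hb).ne'
  rw [sqrt_div' a hb.le]
  nth_rewrite 2 [← sq_sqrt hb.le]
  field_simp

lemma sqrt_sub_sqrt_sq_le_mul_log_div_sub_add {a b : ℝ} (ha : 0 ≤ a) (hb : 0 ≤ b)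
    (hab : b = 0 → a = 0) : (√a - √b) ^ 2 ≤ a * log (a / b) - a + b := by
  rcases hb.eq_or_lt with rfl | hb0
  · simp [hab rfl]
  rw [mul_log_div_sub_add_eq_mul hb0.ne', sqrt_sub_sqrt_sq_eq_mul hb0]
  exact mul_le_mul_of_nonneg_left (sqrt_sub_one_sq_le_mul_log_sub_add_one (by positivity)) hb

lemma mul_log_div_sub_add_le_two_add_log_mul {a b M : ℝ} (ha : 0 ≤ a) (hb : 0 ≤ b)
    (habM : a ≤ M * b) (hM : 1 ≤ M) :
    a * log (a / b) - a + b ≤ (2 + log M) * (√a - √b) ^ 2 := by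
  rcases hb.eq_or_lt with rfl | hb0
  · simp [le_antisymm (by simpa using habM) ha]
  rw [mul_log_div_sub_add_eq_mul hb0.ne', sqrt_sub_sqrt_sq_eq_mul hb0, mul_left_comm]
  exact mul_le_mul_of_nonneg_left (mul_log_sub_add_one_le_two_add_log_mul_of_le (by positivity)
    (div_le_of_le_mul₀ hb (by linarith) habM) hM) hb

end Real

section

variable {α : Type*} [MeasurableSpace α] {μ : Measure α} {s t : α → ℝ}

lemma ae_le_essSup_div_mul (ht : ∀ᵐ x ∂μ, 0 ≤ t x) (hac : ∀ᵐ x ∂μ, t x = 0 → s x = 0)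
    (hbdd : Filter.IsBoundedUnder (· ≤ ·) (ae μ) (fun x => s x / t x)) :
    ∀ᵐ x ∂μ, s x ≤ essSup (fun x => s x / t x) μ * t x := by
  filter_upwards [ae_le_essSup hbdd, ht, hac] with x hle ht0 hac0
  rcases ht0.eq_or_lt with h0 | h0
  · simp [hac0 h0.symm, ← h0]
  · exact (div_le_iff₀ h0).1 hle

lemma one_le_of_ae_le_const_mul {M : ℝ} (hs : Integrable s μ) (ht : Integrable t μ)
    (hs1 : ∫ x, s x ∂μ = 1) (ht1 : ∫ x, t x ∂μ = 1) (hsM : ∀ᵐ x ∂μ, s x ≤ M * t x) : 1 ≤ M := by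
  simpa [hs1, integral_const_mul, ht1] using integral_mono_ae hs (ht.const_mul M) hsM

lemma integral_mul_log_div_sub_add (hKL : Integrable (fun x => s x * log (s x / t x)) μ)
    (hs : Integrable s μ) (ht : Integrable t μ) (hst : ∫ x, s x ∂μ = ∫ x, t x ∂μ) :
    ∫ x, s x * log (s x / t x) - s x + t x ∂μ = ∫ x, s x * log (s x / t x) ∂μ := by
  rw [integral_add (f := fun x => s x * log (s x / t x) - s x) (hKL.sub hs) ht,
    integral_sub hKL hs, hst, sub_add_cancel]

end

theorem hellinger_kl_ratio_bound_general {α : Type*} [MeasurableSpace α] (μ : Measure α)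
    (s t : α → ℝ)
    (hs : ∀ᵐ x ∂μ, 0 ≤ s x) (ht : ∀ᵐ x ∂μ, 0 ≤ t x)
    (hs1 : ∫ x, s x ∂μ = 1) (ht1 : ∫ x, t x ∂μ = 1)
    (hac : ∀ᵐ x ∂μ, t x = 0 → s x = 0)
    (hbdd : Filter.IsBoundedUnder (· ≤ ·) (MeasureTheory.ae μ) (fun x => s x / t x))
    (hKL : Integrable (fun x => s x * Real.log (s x / t x)) μ)
    (hHel : Integrable (fun x => (Real.sqrt (s x) - Real.sqrt (t x))^2) μ) :
    ∫ x, (Real.sqrt (s x) - Real.sqrt (t x))^2 ∂μ ≤ ∫ x, s x * Real.log (s x / t x) ∂μ ∧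
    ∫ x, s x * Real.log (s x / t x) ∂μ ≤
      (2 + Real.log (essSup (fun x => s x / t x) μ)) *
        ∫ x, (Real.sqrt (s x) - Real.sqrt (t x))^2 ∂μ := by
  have hs_int : Integrable s μ := .of_integral_ne_zero (by simp [hs1])
  have ht_int : Integrable t μ := .of_integral_ne_zero (by simp [ht1])
  have hsM := ae_le_essSup_div_mul ht hac hbdd
  have hM := one_le_of_ae_le_const_mul hs_int ht_int hs1 ht1 hsM
  have hg_int := (hKL.sub hs_int).add ht_int
  rw [← integral_mul_log_div_sub_add hKL hs_int ht_int (hs1.trans ht1.symm), ← integral_const_mul]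
  constructor
  · refine integral_mono_ae hHel hg_int ?_
    filter_upwards [hs, ht, hac] with x hsx htx hacx
    exact sqrt_sub_sqrt_sq_le_mul_log_div_sub_add hsx htx hacx
  · refine integral_mono_ae hg_int (hHel.const_mul _) ?_
    filter_upwards [hs, ht, hsM] with x hsx htx hsMx
    exact mul_log_div_sub_add_le_two_add_log_mul hsx htx hsMx hM

/-- If `s dμ ≪ t dμ` and `‖s/t‖_∞ < ∞`, then
`d²(s,t) ≤ KL(s,t) ≤ (2 + ln‖s/t‖_∞) d²(s,t)`. -/
theorem hellinger_kl_ratio_bound {α : Type*} [MeasurableSpace α] (μ : Measure α)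
    [SigmaFinite μ] (s t : α → ℝ)
    (hs : ∀ᵐ x ∂μ, 0 ≤ s x) (ht : ∀ᵐ x ∂μ, 0 ≤ t x)
    (hs1 : ∫ x, s x ∂μ = 1) (ht1 : ∫ x, t x ∂μ = 1)
    (hac : ∀ᵐ x ∂μ, t x = 0 → s x = 0)
    (hbdd : Filter.IsBoundedUnder (· ≤ ·) (MeasureTheory.ae μ) (fun x => s x / t x))
    (hKL : Integrable (fun x => s x * Real.log (s x / t x)) μ)
    (hHel : Integrable (fun x => (Real.sqrt (s x) - Real.sqrt (t x))^2) μ) :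
    ∫ x, (Real.sqrt (s x) - Real.sqrt (t x))^2 ∂μ ≤ ∫ x, s x * Real.log (s x / t x) ∂μ ∧
    ∫ x, s x * Real.log (s x / t x) ∂μ ≤
      (2 + Real.log (essSup (fun x => s x / t x) μ)) *
        ∫ x, (Real.sqrt (s x) - Real.sqrt (t x))^2 ∂μ :=
  hellinger_kl_ratio_bound_general μ s t hs ht hs1 ht1 hac hbdd hKL hHel
end

section
/- The function Φ(x) = (1+x) ln(1+x) − x satisfies: Φ(x)/x² is non-increasing on (−1, +∞) (with value 1/2 at 0 by continuity). Consequently, for ρ ∈ (0,1) and all u ∈ [−1/ρ, 1/(1−ρ)], (1+ρu) ln(1+ρu) − ρu ≥ (1−ρ)(ln(1 + ρ/(1−ρ)) − ρ) u². -/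
open Real MeasureTheory

/-!
Since `Φ(0) = Φ'(0) = 0` and `Φ''(x) = 1 / (1 + x)`, Taylor's formula with integral remainder gives
`Φ(x) / x² = ∫₀¹ (1 - s) / (1 + x s) ds`, and the integrand is non-increasing in `x` for every
`s ∈ [0, 1]`. For the quadratic bound, `ρ u` lies in `[-1, ρ / (1 - ρ)]`, and the value of
`Φ(x) / x²` at the endpoint `ρ / (1 - ρ)` is `(1 - ρ) (log (1 + ρ / (1 - ρ)) - ρ) / ρ²`.
-/

noncomputable def phi (x : ℝ) : ℝ := (1 + x) * log (1 + x) - x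

noncomputable def phiDivSq (x : ℝ) : ℝ := if x = 0 then 1 / 2 else phi x / x ^ 2

lemma phiDivSq_mul_sq (x : ℝ) : phiDivSq x * x ^ 2 = phi x := by
  by_cases hx : x = 0
  · simp [phiDivSq, phi, hx]
  · rw [phiDivSq, if_neg hx, div_mul_cancel₀ _ (pow_ne_zero 2 hx)]

lemma one_add_mul_pos {s x : ℝ} (hs : s ∈ Set.Icc (0 : ℝ) 1) (hx : -1 < x) :
    0 < 1 + x * s := by
  nlinarith [mul_nonneg hs.1 (by linarith : (0 : ℝ) ≤ 1 + x), hs.2]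

lemma continuousOn_one_sub_div_one_add_mul {x : ℝ} (hx : -1 < x) :
    ContinuousOn (fun s : ℝ => (1 - s) / (1 + x * s)) (Set.Icc 0 1) :=
  ContinuousOn.div (by fun_prop) (by fun_prop) fun _ hs => (one_add_mul_pos hs hx).ne'

lemma hasDerivAt_primitive_one_sub_div_one_add_mul {x s : ℝ} (hx : x ≠ 0) (hs : 1 + x * s ≠ 0) :
    HasDerivAt (fun s : ℝ => (x + 1) / x ^ 2 * log (1 + x * s) - s / x)
      ((1 - s) / (1 + x * s)) s := by
  have hlin : HasDerivAt (fun s : ℝ => 1 + x * s) x s := by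
    simpa using ((hasDerivAt_id' s).const_mul x).const_add 1
  have hid : HasDerivAt (fun s : ℝ => s / x) (1 / x) s := (hasDerivAt_id' s).div_const x
  refine (((hlin.log hs).const_mul ((x + 1) / x ^ 2)).fun_sub hid).congr_deriv ?_
  field_simp
  ring

lemma phiDivSq_eq_integral {x : ℝ} (hx : -1 < x) :
    phiDivSq x = ∫ s in (0 : ℝ)..1, (1 - s) / (1 + x * s) := by
  by_cases h0 : x = 0
  · subst h0
    simp only [zero_mul, add_zero, div_one]
    rw [intervalIntegral.integral_sub intervalIntegrable_const intervalIntegral.intervalIntegrable_id]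
    norm_num [phiDivSq]
  · have hint :=
      (continuousOn_one_sub_div_one_add_mul hx).intervalIntegrable_of_Icc (μ := volume) zero_le_one
    rw [intervalIntegral.integral_eq_sub_of_hasDerivAt
      (fun s hs => hasDerivAt_primitive_one_sub_div_one_add_mul h0 (one_add_mul_pos ?_ hx).ne') hint]
    · simp only [phiDivSq, phi, if_neg h0, mul_one, mul_zero, add_zero, log_one]
      field_simp
      ring
    · rwa [Set.uIcc_of_le zero_le_one] at hs

lemma antitoneOn_phiDivSq : AntitoneOn phiDivSq (Set.Ioi (-1)) := by
  intro x hx y hy hxy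
  rw [phiDivSq_eq_integral hx, phiDivSq_eq_integral hy]
  refine intervalIntegral.integral_mono_on zero_le_one
    ((continuousOn_one_sub_div_one_add_mul hy).intervalIntegrable_of_Icc zero_le_one)
    ((continuousOn_one_sub_div_one_add_mul hx).intervalIntegrable_of_Icc zero_le_one) fun s hs => ?_
  refine div_le_div_of_nonneg_left (by linarith [hs.2]) (one_add_mul_pos hs hx) ?_
  nlinarith [hs.1]

lemma phiDivSq_mul_sq_le_phi {r y : ℝ} (hr : 0 ≤ r) (hy : -1 ≤ y) (hyr : y ≤ r) :
    phiDivSq r * y ^ 2 ≤ phi y := by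
  rcases hy.eq_or_lt with rfl | hy
  · -- `phi (-1) = 1`, since `log 0 = 0`
    have : phiDivSq r ≤ phiDivSq 0 :=
      antitoneOn_phiDivSq (by norm_num : (0 : ℝ) ∈ Set.Ioi (-1)) (by simp; linarith) hr
    norm_num [phi, phiDivSq] at this ⊢
    linarith
  · rw [← phiDivSq_mul_sq y]
    exact mul_le_mul_of_nonneg_right (antitoneOn_phiDivSq hy (by simp; linarith) hyr) (sq_nonneg y)

/-- `Φ(x) = (1+x)ln(1+x) − x` satisfies: `Φ(x)/x²` (with value `1/2` at `0`)
is non-increasing on `(−1, ∞)`; consequently for `ρ ∈ (0,1)` and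
`u ∈ [−1/ρ, 1/(1−ρ)]`, `(1+ρu)ln(1+ρu) − ρu ≥ (1−ρ)(ln(1 + ρ/(1−ρ)) − ρ)u²`. -/
theorem phi_div_sq_antitone :
    AntitoneOn (fun x : ℝ => if x = 0 then 1/2 else ((1 + x) * Real.log (1 + x) - x) / x^2)
      (Set.Ioi (-1 : ℝ)) ∧
    ∀ ρ : ℝ, ρ ∈ Set.Ioo (0:ℝ) 1 → ∀ u : ℝ, u ∈ Set.Icc (-(1/ρ)) (1/(1-ρ)) →
      (1 - ρ) * (Real.log (1 + ρ/(1-ρ)) - ρ) * u^2 ≤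
        (1 + ρ*u) * Real.log (1 + ρ*u) - ρ*u := by
  refine ⟨antitoneOn_phiDivSq, fun ρ ⟨hρ0, hρ1⟩ u ⟨hu_ge, hu_le⟩ => ?_⟩
  have h1ρ : 0 < 1 - ρ := sub_pos.mpr hρ1
  have hρu_ge : -1 ≤ ρ * u := by
    have := mul_le_mul_of_nonneg_left hu_ge hρ0.le
    rwa [mul_neg, mul_one_div_cancel hρ0.ne'] at this
  have hρu_le : ρ * u ≤ ρ / (1 - ρ) := by
    have := mul_le_mul_of_nonneg_left hu_le hρ0.le
    rwa [mul_one_div] at this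
  have hr : 0 < ρ / (1 - ρ) := div_pos hρ0 h1ρ
  calc (1 - ρ) * (log (1 + ρ / (1 - ρ)) - ρ) * u ^ 2 = phiDivSq (ρ / (1 - ρ)) * (ρ * u) ^ 2 := by
        rw [phiDivSq, if_neg hr.ne', phi]
        field_simp
        ring
    _ ≤ phi (ρ * u) := phiDivSq_mul_sq_le_phi hr.le hρu_ge hρu_le
end

section
/- For every ρ ∈ (0,1) and every u ∈ [−1/ρ, 1/(1−ρ)], 1 − √(1 + (2ρ−1)u − ρ(1−ρ)u²) + (ρ − 1/2)u ≤ (max(ρ, 1−ρ)/2) · u². -/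
open Real

/-
Write `a = 1 + ρu` and `b = 1 - (1-ρ)u`, both nonnegative on the given interval, so that the
radicand is `ab`, `a - b = u` and the left-hand side is `(a+b)/2 - √(ab) = (√a - √b)²/2`.
Since `(√a - √b)²(√a + √b)² = (a - b)²` and `(√a + √b)² ≥ a + b`, this is at most
`(a - b)² / (2(a + b))`; finally `a + b = 2 + (2ρ-1)u` is affine in `u` and equals `1/ρ` and
`1/(1-ρ)` at the two endpoints, so `a + b ≥ 1 / max ρ (1-ρ)`.
-/

lemma add_div_two_sub_sqrt_mul_eq {a b : ℝ} (ha : 0 ≤ a) (hb : 0 ≤ b) :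
    (a + b) / 2 - √(a * b) = (√a - √b) ^ 2 / 2 := by
  rw [sqrt_mul ha]
  nlinarith [sq_sqrt ha, sq_sqrt hb]

lemma sq_sqrt_sub_sqrt_mul_add_le {a b : ℝ} (ha : 0 ≤ a) (hb : 0 ≤ b) :
    (√a - √b) ^ 2 * (a + b) ≤ (a - b) ^ 2 := by
  have hsq : (a - b) ^ 2 = (√a - √b) ^ 2 * (√a + √b) ^ 2 := by
    nlinarith [sq_sqrt ha, sq_sqrt hb]
  have hsum : a + b ≤ (√a + √b) ^ 2 := by
    nlinarith [sq_sqrt ha, sq_sqrt hb, mul_nonneg (sqrt_nonneg a) (sqrt_nonneg b)]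
  rw [hsq]
  exact mul_le_mul_of_nonneg_left hsum (sq_nonneg _)

lemma add_div_two_sub_sqrt_mul_le {a b c : ℝ} (ha : 0 ≤ a) (hb : 0 ≤ b)
    (hc : 1 ≤ c * (a + b)) :
    (a + b) / 2 - √(a * b) ≤ c / 2 * (a - b) ^ 2 := by
  have hc0 : 0 ≤ c := by nlinarith
  calc (a + b) / 2 - √(a * b) = (√a - √b) ^ 2 / 2 := add_div_two_sub_sqrt_mul_eq ha hb
    _ ≤ c * (a + b) * (√a - √b) ^ 2 / 2 := by nlinarith [sq_nonneg (√a - √b)]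
    _ ≤ c / 2 * (a - b) ^ 2 := by
      nlinarith [mul_le_mul_of_nonneg_left (sq_sqrt_sub_sqrt_mul_add_le ha hb) hc0]

lemma nonneg_factors_of_mem_Icc {ρ u : ℝ} (hρ : ρ ∈ Set.Ioo (0 : ℝ) 1)
    (hu : u ∈ Set.Icc (-(1 / ρ)) (1 / (1 - ρ))) :
    0 ≤ 1 + ρ * u ∧ 0 ≤ 1 - (1 - ρ) * u := by
  obtain ⟨hρ0, hρ1⟩ := hρ
  have h1ρ : 0 < 1 - ρ := sub_pos.2 hρ1
  constructor
  · nlinarith [hu.1, mul_one_div_cancel hρ0.ne']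
  · nlinarith [hu.2, mul_one_div_cancel h1ρ.ne']

lemma one_le_max_mul_add_factors {ρ u : ℝ} (ha : 0 ≤ 1 + ρ * u) (hb : 0 ≤ 1 - (1 - ρ) * u) :
    1 ≤ max ρ (1 - ρ) * ((1 + ρ * u) + (1 - (1 - ρ) * u)) := by
  rcases le_total (1 / 2 : ℝ) ρ with h | h
  · rw [max_eq_left (by linarith)]
    nlinarith
  · rw [max_eq_right (by linarith)]
    nlinarith

/-- For `ρ ∈ (0,1)` and `u ∈ [−1/ρ, 1/(1−ρ)]`,
`1 − √(1 + (2ρ−1)u − ρ(1−ρ)u²) + (ρ − 1/2)u ≤ (max(ρ,1−ρ)/2)·u²`. -/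
theorem one_sub_sqrt_quadratic_bound (ρ u : ℝ) (hρ : ρ ∈ Set.Ioo (0:ℝ) 1)
    (hu : u ∈ Set.Icc (-(1/ρ)) (1/(1-ρ))) :
    1 - Real.sqrt (1 + (2*ρ - 1)*u - ρ*(1-ρ)*u^2) + (ρ - 1/2)*u ≤
      max ρ (1 - ρ) / 2 * u^2 := by
  obtain ⟨ha, hb⟩ := nonneg_factors_of_mem_Icc hρ hu
  have key := add_div_two_sub_sqrt_mul_le ha hb (one_le_max_mul_add_factors ha hb)
  have hprod : (1 + ρ * u) * (1 - (1 - ρ) * u) = 1 + (2*ρ - 1)*u - ρ*(1-ρ)*u^2 := by ring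
  rw [hprod] at key
  linarith
end

section
/- For any σ ∈ [0,1], ∫₀^σ √(ln(1/δ)) dδ ≤ σ(√(ln(1/σ)) + √π). -/
/-!
Writing `log (1/δ) = log (1/σ) + log (σ/δ)` and using that `√` is subadditive, it suffices to
bound `∫₀^σ √(log (σ/δ)) dδ` by `σ √π`. The elementary inequality `log y ≤ 2 √y / e` gives
`√(log (σ/δ)) ≤ √(2/e) (σ/δ)^(1/4)`, whose integral over `(0, σ]` is `(4/3) √(2/e) σ ≤ √π σ`.
-/

open Real MeasureTheory

namespace Real

theorem self_le_sqrt_sq (x : ℝ) : x ≤ √x ^ 2 := by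
  rcases le_total 0 x with hx | hx
  · rw [sq_sqrt hx]
  · exact hx.trans (sq_nonneg _)

theorem sqrt_add_le_add_sqrt (x y : ℝ) : √(x + y) ≤ √x + √y :=
  sqrt_le_left (by positivity) |>.mpr <| by
    nlinarith [self_le_sqrt_sq x, self_le_sqrt_sq y, mul_nonneg (sqrt_nonneg x) (sqrt_nonneg y)]

theorem sqrt_log_mul_le {x y : ℝ} (hx : x ≠ 0) (hy : y ≠ 0) :
    √(log (x * y)) ≤ √(log x) + √(log y) := by
  rw [log_mul hx hy]
  exact sqrt_add_le_add_sqrt _ _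

theorem log_le_div_exp_one {x : ℝ} (hx : 0 ≤ x) : log x ≤ x / exp 1 := by
  rcases hx.eq_or_lt with rfl | hx
  · simp
  have := log_le_sub_one_of_pos (div_pos hx (exp_pos 1))
  rw [log_div hx.ne' (exp_pos 1).ne', log_exp] at this
  linarith

theorem log_le_rpow_div_mul_exp_one {x ε : ℝ} (hx : 0 ≤ x) (hε : 0 < ε) :
    log x ≤ x ^ ε / (ε * exp 1) := by
  rcases hx.eq_or_lt with rfl | hx
  · rw [log_zero, zero_rpow hε.ne', zero_div]
  have := log_le_div_exp_one (rpow_nonneg hx.le ε)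
  rwa [log_rpow hx, ← le_div_iff₀' hε, div_div, mul_comm (exp 1)] at this

theorem sqrt_log_le_mul_rpow {x : ℝ} (hx : 0 ≤ x) :
    √(log x) ≤ √(2 / exp 1) * x ^ (1 / 4 : ℝ) := by
  have hlog := log_le_rpow_div_mul_exp_one hx (ε := 1 / 2) (by norm_num)
  calc √(log x) ≤ √(2 / exp 1 * x ^ (1 / 2 : ℝ)) := sqrt_le_sqrt (by
        convert hlog using 1; field_simp)
    _ = √(2 / exp 1) * x ^ (1 / 4 : ℝ) := by
        rw [sqrt_mul (by positivity), sqrt_eq_rpow (x ^ _), ← rpow_mul hx]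
        norm_num

theorem sqrt_two_div_exp_one_mul_le_sqrt_pi : √(2 / exp 1) * (4 / 3) ≤ √π := by
  rw [show (4 / 3 : ℝ) = √((4 / 3) ^ 2) by rw [sqrt_sq (by norm_num)],
    ← sqrt_mul (by positivity)]
  refine sqrt_le_sqrt ?_
  rw [div_mul_eq_mul_div, div_le_iff₀ (exp_pos 1)]
  nlinarith [exp_one_gt_two, pi_gt_three]

end Real

section DivRpow

variable {σ p : ℝ}

theorem div_rpow_eqOn_Ioc :
    Set.EqOn (fun δ ↦ (σ / δ) ^ p) (fun δ ↦ σ ^ p * δ ^ (-p)) (Set.Ioc 0 σ) := by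
  rintro δ ⟨hδ, hδσ⟩
  simp only
  rw [div_rpow (hδ.le.trans hδσ) hδ.le, rpow_neg hδ.le, div_eq_mul_inv]

theorem integrableOn_Ioc_div_rpow (hp : p < 1) :
    IntegrableOn (fun δ ↦ (σ / δ) ^ p) (Set.Ioc 0 σ) := by
  rcases le_total σ 0 with hσ | hσ
  · simp [Set.Ioc_eq_empty_of_le hσ]
  refine IntegrableOn.congr_fun ?_ div_rpow_eqOn_Ioc.symm measurableSet_Ioc
  refine Integrable.const_mul ?_ _
  exact (intervalIntegrable_iff_integrableOn_Ioc_of_le hσ).mp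
    (intervalIntegral.intervalIntegrable_rpow' (by linarith))

theorem integral_Ioc_div_rpow (hσ : 0 ≤ σ) (hp : p < 1) :
    ∫ δ in Set.Ioc 0 σ, (σ / δ) ^ p = σ / (1 - p) := by
  rw [setIntegral_congr_fun measurableSet_Ioc div_rpow_eqOn_Ioc, integral_const_mul,
    ← intervalIntegral.integral_of_le hσ, integral_rpow (Or.inl (by linarith)),
    zero_rpow (by linarith), sub_zero, mul_div_assoc', ← rpow_add' hσ (by linarith)]
  ring_nf
  rw [rpow_one, mul_comm]

end DivRpow

/-- For `σ ∈ [0,1]`, `∫₀^σ √(ln(1/δ)) dδ ≤ σ(√(ln(1/σ)) + √π)`. -/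
theorem integral_sqrt_log_inv_le (σ : ℝ) (hσ : σ ∈ Set.Icc (0:ℝ) 1) :
    ∫ δ in Set.Ioc (0:ℝ) σ, Real.sqrt (Real.log (1/δ)) ≤
      σ * (Real.sqrt (Real.log (1/σ)) + Real.sqrt π) := by
  set c := √(2 / exp 1)
  have hbound : ∀ δ ∈ Set.Ioc 0 σ,
      √(log (1 / δ)) ≤ √(log (1 / σ)) + c * (σ / δ) ^ (1 / 4 : ℝ) := by
    rintro δ ⟨hδ, hδσ⟩
    have hσpos : 0 < σ := hδ.trans_le hδσ
    rw [show 1 / δ = 1 / σ * (σ / δ) by field_simp]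
    exact (sqrt_log_mul_le (by positivity) (by positivity)).trans
      (add_le_add le_rfl (sqrt_log_le_mul_rpow (by positivity)))
  have hconst : IntegrableOn (fun _ ↦ √(log (1 / σ))) (Set.Ioc 0 σ) :=
    integrableOn_const measure_Ioc_lt_top.ne
  have hrpow : IntegrableOn (fun δ ↦ c * (σ / δ) ^ (1 / 4 : ℝ)) (Set.Ioc 0 σ) :=
    (integrableOn_Ioc_div_rpow (by norm_num)).const_mul c
  calc ∫ δ in Set.Ioc 0 σ, √(log (1 / δ))
      ≤ ∫ δ in Set.Ioc 0 σ, (√(log (1 / σ)) + c * (σ / δ) ^ (1 / 4 : ℝ)) :=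
        integral_mono_of_nonneg (.of_forall fun _ ↦ sqrt_nonneg _) (hconst.add hrpow)
          ((ae_restrict_mem measurableSet_Ioc).mono hbound)
    _ = σ * √(log (1 / σ)) + c * (4 / 3) * σ := by
        rw [integral_add hconst hrpow, integral_const_mul, integral_Ioc_div_rpow hσ.1 (by norm_num),
          setIntegral_const, volume_real_Ioc_of_le hσ.1, smul_eq_mul]
        ring
    _ ≤ σ * (√(log (1 / σ)) + √π) := by
        have hc : c * (4 / 3) ≤ √π := sqrt_two_div_exp_one_mul_le_sqrt_pi
        nlinarith [hσ.1]
end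

section
/- Let Z be a real random variable and Ψ : ℝ → ℝ a non-decreasing function such that for every event A with P(A) > 0, E[Z·1_A]/P(A) ≤ Ψ(ln(1/P(A))). Then for every x ∈ ℝ, P(Z > Ψ(x)) ≤ e^{−x}. -/
/-!
Take `A = {Z > Ψ x}`; if `P(A) = 0` there is nothing to prove. Otherwise the conditional mean of
`Z` on `A` is strictly larger than `Ψ x`, while by hypothesis it is at most `Ψ (log (1 / P(A)))`.
Monotonicity of `Ψ` then forces `x < log (1 / P(A))`, i.e. `P(A) < e^{-x}`.
-/

open Real MeasureTheory

theorem MeasureTheory.mul_measureReal_lt_setIntegral_of_lt {Ω : Type*} [MeasurableSpace Ω]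
    {μ : Measure Ω} {f : Ω → ℝ} {c : ℝ} (hf : IntegrableOn f {ω | c < f ω} μ)
    (hμ_fin : μ {ω | c < f ω} ≠ ⊤) (hμ : μ {ω | c < f ω} ≠ 0) :
    c * μ.real {ω | c < f ω} < ∫ ω in {ω | c < f ω}, f ω ∂μ := by
  have hc : IntegrableOn (fun _ ↦ c) {ω | c < f ω} μ := integrableOn_const hμ_fin
  have hsub : IntegrableOn (fun ω ↦ f ω - c) {ω | c < f ω} μ := hf.sub hc
  -- `setIntegral_gt_gt` only allows a nonnegative threshold, so shift `f` by `c`.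
  have hpos := setIntegral_gt_gt (μ := μ) (R := 0) le_rfl (f := fun ω ↦ f ω - c)
    (by simpa only [NNReal.coe_zero, sub_pos] using hsub)
    (by simpa only [NNReal.coe_zero, sub_pos] using hμ)
  simp only [sub_pos, mul_zero] at hpos
  rw [integral_sub hf hc, setIntegral_const, smul_eq_mul] at hpos
  linarith

theorem Real.lt_exp_neg_of_lt_log_one_div {p x : ℝ} (hp : 0 < p) (hx : x < log (1 / p)) :
    p < exp (-x) := by
  rw [one_div, log_inv] at hx
  exact (log_lt_iff_lt_exp hp).1 (by linarith)

/-- If `E[Z·1_A]/P(A) ≤ Ψ(ln(1/P(A)))` for every event `A` with positive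
probability, with `Ψ` non-decreasing, then `P(Z > Ψ(x)) ≤ e^{−x}` for every `x`. -/
theorem deviation_from_conditional_bound {Ω : Type*} [MeasurableSpace Ω]
    (μ : Measure Ω) [IsProbabilityMeasure μ]
    (Z : Ω → ℝ) (hZmeas : Measurable Z) (hZint : Integrable Z μ)
    (Ψ : ℝ → ℝ) (hΨ : Monotone Ψ)
    (h : ∀ A : Set Ω, MeasurableSet A → 0 < μ A →
      (∫ ω in A, Z ω ∂μ) / (μ A).toReal ≤ Ψ (Real.log (1 / (μ A).toReal))) :
    ∀ x : ℝ, (μ {ω | Ψ x < Z ω}).toReal ≤ Real.exp (-x) := by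
  intro x
  set A := {ω | Ψ x < Z ω}
  by_cases hA0 : μ A = 0
  · simp [hA0, (exp_pos _).le]
  have hp : 0 < μ.real A := ENNReal.toReal_pos hA0 (measure_ne_top μ A)
  have hmean : Ψ x < (∫ ω in A, Z ω ∂μ) / μ.real A :=
    (lt_div_iff₀ hp).2
      (mul_measureReal_lt_setIntegral_of_lt hZint.integrableOn (measure_ne_top μ A) hA0)
  have hAmeas : MeasurableSet A := measurableSet_lt measurable_const hZmeas
  have hx : x < log (1 / μ.real A) :=
    hΨ.reflect_lt (hmean.trans_le (h A hAmeas (pos_iff_ne_zero.2 hA0)))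
  exact (lt_exp_neg_of_lt_log_one_div hp hx).le
end

section
/- Let A be a D×D diagonal positive matrix with det A = 1 and λ₋ ≤ A_{i,i} ≤ λ₊ for all i, where 0 < λ₋ ≤ λ₊. Then there exists a diagonal matrix Ã with det Ã = 1, λ₋ ≤ Ã_{i,i} ≤ (1+δ)λ₊ for all i, whose first D−1 diagonal entries lie in the geometric grid {λ₋(1+δ)^g : g ∈ ℕ}, such that |Ã_{i,i}^{−1} − A_{i,i}^{−1}| ≤ δ λ₋^{−1} for every 1 ≤ i ≤ D. -/
/-!
Write `a i = lm * c ^ x i` with `c = 1 + δ` and `x i ≥ 0`. Rounding the `x i` of all but the last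
entry to naturals `g i` one at a time, each time flooring the accumulated error plus `x i`, keeps
`|g i - x i| < 1` and the accumulated error `∑ (x i - g i)` in `[0, 1)`. The last entry absorbs
that error as a factor `c ^ e` with `0 ≤ e < 1`, so the determinant is unchanged, and every entry
moves by a factor in `[c⁻¹, c]`, which bounds the change of its inverse by `δ / a i ≤ δ / lm`.
-/

open Real Matrix

theorem abs_inv_sub_inv_le_mul_inv {a t δ : ℝ} (hδ : 0 ≤ δ) (ha : 0 < a)
    (h₁ : a ≤ (1 + δ) * t) (h₂ : t ≤ (1 + δ) * a) : |t⁻¹ - a⁻¹| ≤ δ * a⁻¹ := by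
  have ht : 0 < t := by nlinarith
  rw [abs_sub_le_iff, inv_sub_inv ht.ne' ha.ne', inv_sub_inv ha.ne' ht.ne',
    div_le_iff₀ (by positivity), div_le_iff₀ (by positivity)]
  constructor <;> field_simp <;> nlinarith

theorem exists_nat_sum_sub_mem_Ico :
    ∀ {n : ℕ} (x : Fin n → ℝ), (∀ i, 0 ≤ x i) →
      ∃ g : Fin n → ℕ, (∀ i, |(g i : ℝ) - x i| < 1) ∧ ∑ i, (x i - g i) ∈ Set.Ico 0 1
  | 0, _, _ => ⟨finZeroElim, finZeroElim, by simp⟩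
  | n + 1, x, hx => by
    obtain ⟨g, hg, he₀, he₁⟩ := exists_nat_sum_sub_mem_Ico (fun i => x i.castSucc) fun i => hx _
    set s := ∑ i, (x i.castSucc - g i) + x (Fin.last n)
    have hs : 0 ≤ s := add_nonneg he₀ (hx _)
    have h₀ := Nat.floor_le hs
    have h₁ := Nat.lt_floor_add_one s
    refine ⟨Fin.snoc g ⌊s⌋₊, fun i => ?_, ?_⟩
    · induction i using Fin.lastCases with
      | last => rw [Fin.snoc_last, abs_lt]; constructor <;> linarith
      | cast i => rw [Fin.snoc_castSucc]; exact hg i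
    · rw [Fin.sum_univ_castSucc]
      simp only [Fin.snoc_castSucc, Fin.snoc_last, Set.mem_Ico]
      constructor <;> linarith

theorem inv_le_rpow_and_rpow_le_of_abs_le_one {c y : ℝ} (hc : 1 ≤ c) (hy : |y| ≤ 1) : c⁻¹ ≤ c ^ y ∧ c ^ y ≤ c := by
  rw [abs_le] at hy
  constructor
  · rw [← rpow_neg_one]; exact rpow_le_rpow_of_exponent_le hc hy.1
  · conv_rhs => rw [← rpow_one c]
    exact rpow_le_rpow_of_exponent_le hc hy.2

theorem exists_geometric_grid_approx {n : ℕ} {c lm : ℝ} (hc : 1 < c) (hlm : 0 < lm)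
    (a : Fin (n + 1) → ℝ) (ha : ∀ i, lm ≤ a i) :
    ∃ t : Fin (n + 1) → ℝ, ∏ i, t i = ∏ i, a i ∧
      (∀ i, lm ≤ t i ∧ a i ≤ c * t i ∧ t i ≤ c * a i) ∧
      ∀ i : Fin n, ∃ g : ℕ, t i.castSucc = lm * c ^ g := by
  set x := fun i => logb c (a i / lm)
  have hx : ∀ i, 0 ≤ x i := fun i => logb_nonneg hc ((one_le_div hlm).mpr (ha i))
  have ha_eq : ∀ i, a i = lm * c ^ x i := fun i => by
    rw [rpow_logb (by linarith) hc.ne' (div_pos (by linarith [ha i]) hlm)]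
    field_simp
  obtain ⟨g, hg, he₀, he₁⟩ := exists_nat_sum_sub_mem_Ico (fun i => x i.castSucc) fun i => hx _
  set y : Fin (n + 1) → ℝ := Fin.snoc (fun i => g i - x i.castSucc) (∑ i, (x i.castSucc - g i))
  have hy_last : y (Fin.last n) = ∑ i, (x i.castSucc - g i) := Fin.snoc_last ..
  have hy_cast : ∀ i : Fin n, y i.castSucc = g i - x i.castSucc := fun i => Fin.snoc_castSucc ..
  have hy_sum : ∑ i, y i = 0 := by
    simp only [Fin.sum_univ_castSucc, hy_last, hy_cast, Finset.sum_sub_distrib]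
    ring
  have hy_abs : ∀ i, |y i| ≤ 1 := fun i => by
    induction i using Fin.lastCases with
    | last => rw [hy_last, abs_le]; constructor <;> linarith
    | cast i => rw [hy_cast]; exact (hg i).le
  have h_grid : ∀ i : Fin n, a i.castSucc * c ^ y i.castSucc = lm * c ^ g i := fun i => by
    rw [ha_eq, hy_cast, mul_assoc, ← rpow_add (by linarith), add_sub_cancel, rpow_natCast]
  refine ⟨fun i => a i * c ^ y i, ?_, fun i => ⟨?_, ?_, ?_⟩, fun i => ⟨g i, h_grid i⟩⟩
  · rw [Finset.prod_mul_distrib, ← rpow_sum_of_pos (by linarith), hy_sum, rpow_zero, mul_one]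
  · induction i using Fin.lastCases with
    | last =>
      have hc_pow : 1 ≤ c ^ y (Fin.last n) := one_le_rpow hc.le (hy_last ▸ he₀)
      exact (ha _).trans (le_mul_of_one_le_right (hlm.le.trans (ha _)) hc_pow)
    | cast i =>
      simp only [h_grid]
      exact le_mul_of_one_le_right hlm.le (one_le_pow₀ hc.le)
  · calc a i = c * (a i * c⁻¹) := by field_simp
      _ ≤ c * (a i * c ^ y i) := by
        gcongr
        · linarith [ha i]
        · exact (inv_le_rpow_and_rpow_le_of_abs_le_one hc.le (hy_abs i)).1
  · rw [mul_comm c]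
    exact mul_le_mul_of_nonneg_left (inv_le_rpow_and_rpow_le_of_abs_le_one hc.le (hy_abs i)).2 (by linarith [ha i])

theorem eigenvalue_grid_approx_general (D : ℕ) (δ lm lp : ℝ)
    (hδ : 0 < δ) (hlm : 0 < lm)
    (A : Matrix (Fin D) (Fin D) ℝ) (hdiag : A.IsDiag) (hdet : A.det = 1)
    (hbd : ∀ i, lm ≤ A i i ∧ A i i ≤ lp) :
    ∃ At : Matrix (Fin D) (Fin D) ℝ, At.IsDiag ∧ At.det = 1 ∧
      (∀ i, lm ≤ At i i ∧ At i i ≤ (1+δ) * lp) ∧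
      (∀ i : Fin D, (i : ℕ) < D - 1 → ∃ g : ℕ, At i i = lm * (1+δ)^g) ∧
      (∀ i, |(At i i)⁻¹ - (A i i)⁻¹| ≤ δ * lm⁻¹) := by
  cases D with
  | zero => exact ⟨A, hdiag, hdet, finZeroElim, finZeroElim, finZeroElim⟩
  | succ n =>
  obtain ⟨t, ht_prod, ht_bd, ht_grid⟩ :=
    exists_geometric_grid_approx (by linarith : 1 < 1 + δ) hlm A.diag fun i => (hbd i).1
  refine ⟨diagonal t, isDiag_diagonal t, ?_, fun i => ?_, fun i hi => ?_, fun i => ?_⟩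
  · rw [det_diagonal, ht_prod, ← det_diagonal, hdiag.diagonal_diag, hdet]
  · obtain ⟨hlm_le, -, hle⟩ := ht_bd i
    rw [diagonal_apply_eq]
    exact ⟨hlm_le, hle.trans (by gcongr; exact (hbd i).2)⟩
  · rw [diagonal_apply_eq, ← Fin.castSucc_castLT i (by simpa using hi)]
    exact ht_grid _
  · obtain ⟨-, h₁, h₂⟩ := ht_bd i
    rw [diagonal_apply_eq]
    calc _ ≤ δ * (A i i)⁻¹ := abs_inv_sub_inv_le_mul_inv hδ.le (hlm.trans_le (hbd i).1) h₁ h₂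
      _ ≤ δ * lm⁻¹ := by gcongr; exact (hbd i).1

/-- every diagonal positive matrix `A` with `det A = 1` and diagonal
entries in `[λ₋, λ₊]` can be approximated by a diagonal matrix `Ã` with `det Ã = 1`,
entries in `[λ₋, (1+δ)λ₊]`, first `D−1` entries on the geometric grid
`{λ₋(1+δ)^g : g ∈ ℕ}`, and `|Ã_{i,i}⁻¹ − A_{i,i}⁻¹| ≤ δλ₋⁻¹` for all `i`. -/
theorem eigenvalue_grid_approx (D : ℕ) (hD : 2 ≤ D) (δ lm lp : ℝ)
    (hδ : 0 < δ) (hlm : 0 < lm) (hl : lm ≤ lp)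
    (A : Matrix (Fin D) (Fin D) ℝ) (hdiag : A.IsDiag) (hdet : A.det = 1)
    (hbd : ∀ i, lm ≤ A i i ∧ A i i ≤ lp) :
    ∃ At : Matrix (Fin D) (Fin D) ℝ, At.IsDiag ∧ At.det = 1 ∧
      (∀ i, lm ≤ At i i ∧ At i i ≤ (1+δ) * lp) ∧
      (∀ i : Fin D, (i : ℕ) < D - 1 → ∃ g : ℕ, At i i = lm * (1+δ)^g) ∧
      (∀ i, |(At i i)⁻¹ - (A i i)⁻¹| ≤ δ * lm⁻¹) :=
  eigenvalue_grid_approx_general D δ lm lp hδ hlm A hdiag hdet hbd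
end
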